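/- arXiv:1110.0258 — 6 statements merged into one kernel-verified Lean document; each statement's English description precedes it below -/
import Mathlib

section
/- Let S = [[R, T'],[T, R']] ∈ U(2s) written in s×s blocks. A matrix 𝒯 ∈ U(s,s) satisfying the scattering relation (𝒯(a⁺,a⁻)=(b⁺,b⁻) ⟺ S(a⁺,b⁻)=(a⁻,b⁺) for all vectors) exists if and only if the block T is invertible; moreover T is invertible if and only if T' is invertible. -/
open Matrix

noncomputable def Gmat (s : ℕ) : Matrix (Fin s ⊕ Fin s) (Fin s ⊕ Fin s) ℂ :=
  Matrix.fromBlocks 1 0 0 (-1)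

/-!
Unitarity of `S` gives `TᴴT = 1 - RᴴR` and `T'T'ᴴ = 1 - RRᴴ`, and `det (1 - RᴴR) = det (1 - RRᴴ)`,
so `T` and `T'` are invertible together.

Writing `x = (a⁺, b⁻)`, the scattering relation says `P x = (a⁺, a⁻)` and `Q x = (b⁺, b⁻)` for
`P = transferLeft R T' = [[1, 0], [R, T']]` and `Q = transferRight T R' = [[T, R'], [0, 1]]`.
If `T'` is invertible, so is `P`, and `𝒯 = Q P⁻¹` realises the relation; it is pseudo-unitary
because `PᴴGP + SᴴS = QᴴGQ + 1`. Conversely, taking `a⁺ = 0` in the relation shows that `T'` is onto.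
-/

namespace Matrix

variable {n : Type*} [Fintype n] [DecidableEq n] {α : Type*} [CommRing α]

def transferLeft (R T' : Matrix n n α) : Matrix (n ⊕ n) (n ⊕ n) α := fromBlocks 1 0 R T'

def transferRight (T R' : Matrix n n α) : Matrix (n ⊕ n) (n ⊕ n) α := fromBlocks T R' 0 1

theorem isUnit_transferLeft_iff {R T' : Matrix n n α} : IsUnit (transferLeft R T') ↔ IsUnit T' := by
  rw [transferLeft, isUnit_iff_isUnit_det, det_fromBlocks_zero₁₂, det_one, one_mul,
    ← isUnit_iff_isUnit_det]

theorem transferLeft_mulVec_inl (R T' : Matrix n n α) (x : n ⊕ n → α) (i : n) :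
    (transferLeft R T' *ᵥ x) (Sum.inl i) = x (Sum.inl i) := by
  simp [transferLeft, fromBlocks_mulVec]

theorem transferRight_mulVec_inr (T R' : Matrix n n α) (x : n ⊕ n → α) (i : n) :
    (transferRight T R' *ᵥ x) (Sum.inr i) = x (Sum.inr i) := by
  simp [transferRight, fromBlocks_mulVec]

theorem fromBlocks_mulVec_eq_iff (R T' T R' : Matrix n n α) (ap am bp bm : n → α) :
    fromBlocks R T' T R' *ᵥ Sum.elim ap bm = Sum.elim am bp ↔
      transferLeft R T' *ᵥ Sum.elim ap bm = Sum.elim ap am ∧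
        transferRight T R' *ᵥ Sum.elim ap bm = Sum.elim bp bm := by
  simp [transferLeft, transferRight, fromBlocks_mulVec, Sum.elim_eq_iff]

theorem isUnit_of_mulVec_eq_imp_fromBlocks_mulVec_eq {R T' T R' : Matrix n n α}
    {𝒯 : Matrix (n ⊕ n) (n ⊕ n) α}
    (h : ∀ ap am bp bm : n → α, 𝒯 *ᵥ Sum.elim ap am = Sum.elim bp bm →
      fromBlocks R T' T R' *ᵥ Sum.elim ap bm = Sum.elim am bp) : IsUnit T' := by
  rw [← mulVec_surjective_iff_isUnit]
  intro am
  set b := 𝒯 *ᵥ Sum.elim 0 am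
  have hS := h 0 am (b ∘ Sum.inl) (b ∘ Sum.inr) (Sum.elim_comp_inl_inr b).symm
  rw [fromBlocks_mulVec, Sum.elim_eq_iff] at hS
  exact ⟨b ∘ Sum.inr, by simpa using hS.1⟩

noncomputable def transferMatrix (R T' T R' : Matrix n n α) : Matrix (n ⊕ n) (n ⊕ n) α :=
  transferRight T R' * (transferLeft R T')⁻¹

theorem transferMatrix_mulVec_eq_iff {R T' T R' : Matrix n n α} (hT' : IsUnit T')
    (ap am bp bm : n → α) :
    transferMatrix R T' T R' *ᵥ Sum.elim ap am = Sum.elim bp bm ↔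
      fromBlocks R T' T R' *ᵥ Sum.elim ap bm = Sum.elim am bp := by
  have hP := (isUnit_iff_isUnit_det _).mp (isUnit_transferLeft_iff (R := R) |>.mpr hT')
  rw [fromBlocks_mulVec_eq_iff, transferMatrix, ← mulVec_mulVec]
  constructor
  · intro hb
    set x := (transferLeft R T')⁻¹ *ᵥ Sum.elim ap am
    have hx : transferLeft R T' *ᵥ x = Sum.elim ap am := by
      rw [mulVec_mulVec, mul_nonsing_inv _ hP, one_mulVec]
    suffices x = Sum.elim ap bm from this ▸ ⟨hx, hb⟩
    ext (i | i)
    · simpa using transferLeft_mulVec_inl R T' x i ▸ congrFun hx (Sum.inl i)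
    · simpa using transferRight_mulVec_inr T R' x i ▸ congrFun hb (Sum.inr i)
  · rintro ⟨ha, hb⟩
    rw [← ha, mulVec_mulVec (N := transferLeft R T'), nonsing_inv_mul _ hP, one_mulVec, hb]

variable [StarRing α]

theorem isUnit_iff_isUnit_of_fromBlocks_mem_unitaryGroup {R T' T R' : Matrix n n α}
    (hS : fromBlocks R T' T R' ∈ unitaryGroup (n ⊕ n) α) : IsUnit T ↔ IsUnit T' := by
  have h₁ := mem_unitaryGroup_iff'.mp hS
  have h₂ := mem_unitaryGroup_iff.mp hS
  simp only [star_eq_conjTranspose, fromBlocks_conjTranspose, fromBlocks_multiply,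
    ← fromBlocks_one, fromBlocks_inj] at h₁ h₂
  have hT : Tᴴ * T = 1 - Rᴴ * R := eq_sub_of_add_eq' h₁.1
  have hT' : T' * T'ᴴ = 1 - R * Rᴴ := eq_sub_of_add_eq' h₂.1
  have hTT : IsUnit T ↔ IsUnit (Tᴴ * T) := by
    simp only [IsUnit.mul_iff, isUnit_conjTranspose, and_self]
  have hT'T' : IsUnit T' ↔ IsUnit (T' * T'ᴴ) := by
    simp only [IsUnit.mul_iff, isUnit_conjTranspose, and_self]
  rw [hTT, hT'T', hT, hT', isUnit_iff_isUnit_det, det_one_sub_mul_comm, ← isUnit_iff_isUnit_det]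

theorem transferLeft_form_add_eq_transferRight_form_add (R T' T R' : Matrix n n α) :
    (transferLeft R T')ᴴ * fromBlocks 1 0 0 (-1) * transferLeft R T' +
        (fromBlocks R T' T R')ᴴ * fromBlocks R T' T R' =
      (transferRight T R')ᴴ * fromBlocks 1 0 0 (-1) * transferRight T R' + 1 := by
  simp only [transferLeft, transferRight, fromBlocks_conjTranspose, fromBlocks_multiply,
    ← fromBlocks_one, fromBlocks_add]
  congr 1 <;> simp
  abel

theorem conjTranspose_mul_mul_eq_self_of_mul_inv {P Q G : Matrix n n α} (hP : IsUnit P)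
    (h : Qᴴ * G * Q = Pᴴ * G * P) : (Q * P⁻¹)ᴴ * G * (Q * P⁻¹) = G := by
  have hP' : P * P⁻¹ = 1 := mul_nonsing_inv P ((isUnit_iff_isUnit_det P).mp hP)
  calc (Q * P⁻¹)ᴴ * G * (Q * P⁻¹) = P⁻¹ᴴ * (Qᴴ * G * Q) * P⁻¹ := by
        simp only [conjTranspose_mul, Matrix.mul_assoc]
    _ = (P * P⁻¹)ᴴ * G * (P * P⁻¹) := by
        rw [h]; simp only [conjTranspose_mul, Matrix.mul_assoc]
    _ = G := by rw [hP', conjTranspose_one, Matrix.one_mul, Matrix.mul_one]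

theorem transferMatrix_conjTranspose_mul_mul_self {R T' T R' : Matrix n n α}
    (hS : fromBlocks R T' T R' ∈ unitaryGroup (n ⊕ n) α) (hT' : IsUnit T') :
    (transferMatrix R T' T R')ᴴ * fromBlocks 1 0 0 (-1) * transferMatrix R T' T R' =
      fromBlocks 1 0 0 (-1) := by
  refine conjTranspose_mul_mul_eq_self_of_mul_inv (isUnit_transferLeft_iff.mpr hT') ?_
  have h := transferLeft_form_add_eq_transferRight_form_add R T' T R'
  have hSS : (fromBlocks R T' T R')ᴴ * fromBlocks R T' T R' = 1 := mem_unitaryGroup_iff'.mp hS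
  rw [hSS] at h
  exact (add_right_cancel h).symm

end Matrix

/-- For a unitary scattering matrix S = [[R,T'],[T,R']], a pseudo-unitary 𝒯 ∈ U(s,s)
    with the scattering relation exists iff the transmission block T is invertible;
    moreover T is invertible iff T' is invertible. -/
theorem stmt5 (s : ℕ) (R T' T R' : Matrix (Fin s) (Fin s) ℂ)
    (hS : Matrix.fromBlocks R T' T R' ∈ Matrix.unitaryGroup (Fin s ⊕ Fin s) ℂ) :
    ((∃ 𝒯 : Matrix (Fin s ⊕ Fin s) (Fin s ⊕ Fin s) ℂ,
        𝒯ᴴ * Gmat s * 𝒯 = Gmat s ∧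
        ∀ ap am bp bm : Fin s → ℂ,
          (𝒯.mulVec (Sum.elim ap am) = Sum.elim bp bm ↔
           (Matrix.fromBlocks R T' T R').mulVec (Sum.elim ap bm) = Sum.elim am bp)) ↔
      IsUnit T) ∧ (IsUnit T ↔ IsUnit T') := by
  have hTT' := isUnit_iff_isUnit_of_fromBlocks_mem_unitaryGroup hS
  refine ⟨⟨?_, fun hT => ?_⟩, hTT'⟩
  · rintro ⟨𝒯, -, h𝒯⟩
    exact hTT'.mpr <|
      isUnit_of_mulVec_eq_imp_fromBlocks_mulVec_eq fun ap am bp bm => (h𝒯 ap am bp bm).mp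
  · have hT' := hTT'.mp hT
    exact ⟨transferMatrix R T' T R', transferMatrix_conjTranspose_mul_mul_self hS hT',
      transferMatrix_mulVec_eq_iff hT'⟩
end

section
/- Let 𝒯 ∈ Sp(2N) with N = s + h, and write vectors in ℂ^{2N} in four blocks of sizes s, h, s, h. Suppose the h×h matrix A obtained by compressing 𝒯 to the second block (A = P₂ 𝒯 P₂* where P₂ projects onto the second block of coordinates) is invertible. Define the reduced 2s×2s matrix 𝒯̂ = O 𝒯 (1 − P₂* A⁻¹ P₂ 𝒯) O*, where O selects blocks 1 and 3. Then 𝒯̂ ∈ Sp(2s), i.e. 𝒯̂* J_s 𝒯̂ = J_s. -/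
open Matrix

/-- Symplectic form in m×m blocks. -/
noncomputable def Jm (m : Type*) [Fintype m] [DecidableEq m] :
    Matrix (m ⊕ m) (m ⊕ m) ℂ := Matrix.fromBlocks 0 1 (-1) 0

/-- The h×2N matrix (0 1 0 0) extracting the second block of coordinates. -/
noncomputable def P2 (s h : ℕ) : Matrix (Fin h) ((Fin s ⊕ Fin h) ⊕ (Fin s ⊕ Fin h)) ℂ :=
  Matrix.of fun i j => match j with
    | Sum.inl (Sum.inr b) => if i = b then 1 else 0
    | _ => 0

/-- The 2s×2N matrix ((1 0 0 0),(0 0 1 0)) extracting blocks 1 and 3. -/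
noncomputable def Omat (s h : ℕ) :
    Matrix (Fin s ⊕ Fin s) ((Fin s ⊕ Fin h) ⊕ (Fin s ⊕ Fin h)) ℂ :=
  Matrix.of fun i j => match i, j with
    | Sum.inl a, Sum.inl (Sum.inl b) => if a = b then 1 else 0
    | Sum.inr a, Sum.inr (Sum.inl b) => if a = b then 1 else 0
    | _, _ => 0

noncomputable def P4 (s h : ℕ) : Matrix (Fin h) ((Fin s ⊕ Fin h) ⊕ (Fin s ⊕ Fin h)) ℂ :=
  Matrix.of fun i j => match j with
    | Sum.inr (Sum.inr b) => if i = b then 1 else 0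
    | _ => 0

lemma l1 (s h : ℕ) : Omat s h * Jm (Fin s ⊕ Fin h) * (Omat s h)ᴴ = Jm (Fin s) := by
  ext i j
  rcases i with i | i <;> rcases j with j | j <;>
    simp [Omat, Jm, Matrix.mul_apply, Fintype.sum_sum_type, fromBlocks,
      Matrix.conjTranspose_apply, Finset.sum_ite_eq, Finset.sum_ite_eq', Matrix.one_apply] <;>
    aesop

lemma l2 (s h : ℕ) : Omat s h * Jm (Fin s ⊕ Fin h) * (P2 s h)ᴴ = 0 := by
  ext i j
  rcases i with i | i <;>
    simp [Omat, Jm, P2, Matrix.mul_apply, Fintype.sum_sum_type, fromBlocks,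
      Matrix.conjTranspose_apply, Finset.sum_ite_eq, Finset.sum_ite_eq', Matrix.one_apply]

lemma l3 (s h : ℕ) : P2 s h * Jm (Fin s ⊕ Fin h) * (Omat s h)ᴴ = 0 := by
  ext i j
  rcases j with j | j <;>
    simp [Omat, Jm, P2, Matrix.mul_apply, Fintype.sum_sum_type, fromBlocks,
      Matrix.conjTranspose_apply, Finset.sum_ite_eq, Finset.sum_ite_eq', Matrix.one_apply]

lemma l4 (s h : ℕ) : P2 s h * Jm (Fin s ⊕ Fin h) * (P2 s h)ᴴ = 0 := by
  ext i j
  simp [Jm, P2, Matrix.mul_apply, Fintype.sum_sum_type, fromBlocks,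
      Matrix.conjTranspose_apply, Finset.sum_ite_eq, Finset.sum_ite_eq', Matrix.one_apply]

lemma l5 (s h : ℕ) : Jm (Fin s ⊕ Fin h) =
    (Omat s h)ᴴ * Jm (Fin s) * Omat s h + (P2 s h)ᴴ * P4 s h - (P4 s h)ᴴ * P2 s h := by
  ext i j
  rcases i with (i|i)|(i|i) <;> rcases j with (j|j)|(j|j) <;>
    simp [Omat, Jm, P2, P4, Matrix.mul_apply, Fintype.sum_sum_type, fromBlocks,
      Matrix.conjTranspose_apply, Finset.sum_ite_eq, Finset.sum_ite_eq', Matrix.one_apply] <;> aesop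


/-- If 𝒯 ∈ Sp(2N) and the compression A = P₂ 𝒯 P₂* to the hyperbolic block is
    invertible, then the reduced matrix 𝒯̂ = O 𝒯 (1 − P₂* A⁻¹ P₂ 𝒯) O* is in Sp(2s). -/
theorem stmt7 (s h : ℕ)
    (𝒯 : Matrix ((Fin s ⊕ Fin h) ⊕ (Fin s ⊕ Fin h)) ((Fin s ⊕ Fin h) ⊕ (Fin s ⊕ Fin h)) ℂ)
    (hSp : 𝒯ᴴ * Jm (Fin s ⊕ Fin h) * 𝒯 = Jm (Fin s ⊕ Fin h))
    (hA : IsUnit (P2 s h * 𝒯 * (P2 s h)ᴴ)) :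
    (Omat s h * 𝒯 * (1 - (P2 s h)ᴴ * (P2 s h * 𝒯 * (P2 s h)ᴴ)⁻¹ * (P2 s h * 𝒯)) * (Omat s h)ᴴ)ᴴ
      * Jm (Fin s) *
    (Omat s h * 𝒯 * (1 - (P2 s h)ᴴ * (P2 s h * 𝒯 * (P2 s h)ᴴ)⁻¹ * (P2 s h * 𝒯)) * (Omat s h)ᴴ)
      = Jm (Fin s) := by
  set P := P2 s h with hP
  set O := Omat s h with hO
  set Q := P4 s h with hQ
  set J := Jm (Fin s ⊕ Fin h) with hJ
  set Js := Jm (Fin s) with hJs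
  set A := P * 𝒯 * Pᴴ with hAdef
  set M := 1 - Pᴴ * A⁻¹ * (P * 𝒯) with hM
  -- instantiated structural lemmas
  have L1 := l1 s h; rw [← hO, ← hJ, ← hJs] at L1
  have L2 := l2 s h; rw [← hP, ← hO, ← hJ] at L2
  have L3 := l3 s h; rw [← hP, ← hO, ← hJ] at L3
  have L4 := l4 s h; rw [← hP, ← hJ] at L4
  have L5 := l5 s h; rw [← hP, ← hO, ← hQ, ← hJ, ← hJs] at L5
  have hAA : A * A⁻¹ = 1 :=
    Matrix.mul_nonsing_inv A ((Matrix.isUnit_iff_isUnit_det A).mp hA)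
  have hPX : P * (𝒯 * M) = 0 := by
    rw [hM]
    simp only [Matrix.mul_sub, Matrix.mul_one, ← Matrix.mul_assoc]
    rw [← hAdef, hAA, Matrix.one_mul, sub_self]
  have hXPz : Mᴴ * (𝒯ᴴ * Pᴴ) = 0 := by
    have := congrArg conjTranspose hPX
    simpa [Matrix.conjTranspose_mul, Matrix.mul_assoc] using this
  have z1O : P * (𝒯 * (M * Oᴴ)) = 0 := by
    have e : P * (𝒯 * (M * Oᴴ)) = (P * (𝒯 * M)) * Oᴴ := by simp only [Matrix.mul_assoc]
    rw [e, hPX, Matrix.zero_mul]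
  have zt2 : Mᴴ * (𝒯ᴴ * (Pᴴ * (Q * (𝒯 * (M * Oᴴ))))) = 0 := by
    have e : Mᴴ * (𝒯ᴴ * (Pᴴ * (Q * (𝒯 * (M * Oᴴ))))) =
        (Mᴴ * (𝒯ᴴ * Pᴴ)) * (Q * (𝒯 * (M * Oᴴ))) := by simp only [Matrix.mul_assoc]
    rw [e, hXPz, Matrix.zero_mul]
  have l5' : Oᴴ * Js * O = J - Pᴴ * Q + Qᴴ * P := by rw [L5]; abel
  have g1 : Oᴴ * (Js * (O * (𝒯 * (M * Oᴴ)))) =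
      J * (𝒯 * (M * Oᴴ)) - Pᴴ * (Q * (𝒯 * (M * Oᴴ))) + Qᴴ * (P * (𝒯 * (M * Oᴴ))) := by
    have := congrArg (· * (𝒯 * (M * Oᴴ))) l5'
    simpa only [Matrix.add_mul, Matrix.sub_mul, Matrix.mul_assoc] using this
  have z2' : 𝒯ᴴ * (J * (𝒯 * (M * Oᴴ))) = J * (M * Oᴴ) := by
    have := congrArg (· * (M * Oᴴ)) hSp
    simpa only [Matrix.mul_assoc] using this
  have L1' : O * (J * Oᴴ) = Js := by
    have := L1; simpa only [Matrix.mul_assoc] using this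
  have b0 : O * (J * (Pᴴ * (A⁻¹ * (P * (𝒯 * Oᴴ))))) = 0 := by
    have := congrArg (· * (A⁻¹ * (P * (𝒯 * Oᴴ)))) L2
    simpa only [Matrix.mul_assoc, Matrix.zero_mul] using this
  have L3' : P * (J * Oᴴ) = 0 := by
    have := L3; simpa only [Matrix.mul_assoc] using this
  have z4i : P * (J * (Pᴴ * (A⁻¹ * (P * (𝒯 * Oᴴ))))) = 0 := by
    have := congrArg (· * (A⁻¹ * (P * (𝒯 * Oᴴ)))) L4
    simpa only [Matrix.mul_assoc, Matrix.zero_mul] using this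
  have c0 : 𝒯ᴴ * (Pᴴ * ((A⁻¹)ᴴ * (P * (J * Oᴴ)))) = 0 := by
    rw [L3']; simp
  have d0 : 𝒯ᴴ * (Pᴴ * ((A⁻¹)ᴴ * (P * (J * (Pᴴ * (A⁻¹ * (P * (𝒯 * Oᴴ)))))))) = 0 := by
    rw [z4i]; simp
  calc (O * 𝒯 * M * Oᴴ)ᴴ * Js * (O * 𝒯 * M * Oᴴ)
      = O * (Mᴴ * (𝒯ᴴ * (Oᴴ * (Js * (O * (𝒯 * (M * Oᴴ))))))) := by
        simp only [Matrix.conjTranspose_mul, Matrix.conjTranspose_conjTranspose,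
          Matrix.mul_assoc]
    _ = O * (Mᴴ * (𝒯ᴴ * (J * (𝒯 * (M * Oᴴ))))) := by
        rw [g1]
        simp only [Matrix.mul_sub, Matrix.mul_add, z1O, zt2, Matrix.mul_zero, sub_zero,
          add_zero]
    _ = O * (Mᴴ * (J * (M * Oᴴ))) := by rw [z2']
    _ = Js := by
        rw [hM]
        simp only [Matrix.conjTranspose_sub, Matrix.conjTranspose_one,
          Matrix.conjTranspose_mul, Matrix.conjTranspose_conjTranspose, Matrix.sub_mul,
          Matrix.mul_sub, Matrix.one_mul, Matrix.mul_one, Matrix.mul_assoc]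
        rw [L1', b0, c0, d0]
        simp
end

section
/- With the notation of the basis matrix M ∈ Sp(2N) built from the elliptic data (k, with s elliptic channels) and hyperbolic data (γ, u), the conjugated free transfer matrix satisfies M⁻¹ 𝒯⁰ M = blockdiag structure [[cos k, 0, −sin k, 0],[0, u e^γ, 0, 0],[sin k, 0, cos k, 0],[0, 0, 0, u e^{−γ}]] (blocks of sizes s, N−s, s, N−s). -/
open Matrix

/-- The basis-change matrix M from the paper (eq. (18)), in four blocks of sizes
    s, h, s, h, built from the elliptic data k and hyperbolic data γ, u and the
    unitary U diagonalizing W. -/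
noncomputable def Mmat (s h : ℕ) (k : Fin s → ℝ) (γ u : Fin h → ℝ)
    (U : Matrix (Fin s ⊕ Fin h) (Fin s ⊕ Fin h) ℂ) :
    Matrix ((Fin s ⊕ Fin h) ⊕ (Fin s ⊕ Fin h)) ((Fin s ⊕ Fin h) ⊕ (Fin s ⊕ Fin h)) ℂ :=
  Matrix.fromBlocks U 0 0 U *
  Matrix.fromBlocks
    (Matrix.fromBlocks
      (Matrix.diagonal fun i => (((Real.sqrt (Real.sin (k i)))⁻¹ : ℝ) : ℂ)) 0 0
      (Matrix.diagonal fun j => ((u j * (Real.sqrt (2 * Real.sinh (γ j)))⁻¹ : ℝ) : ℂ)))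
    (Matrix.fromBlocks 0 0 0
      (Matrix.diagonal fun j => (((Real.sqrt (2 * Real.sinh (γ j)))⁻¹ : ℝ) : ℂ)))
    (Matrix.fromBlocks
      (Matrix.diagonal fun i =>
        ((Real.cos (k i) * (Real.sqrt (Real.sin (k i)))⁻¹ : ℝ) : ℂ)) 0 0
      (Matrix.diagonal fun j =>
        ((Real.exp (-γ j) * (Real.sqrt (2 * Real.sinh (γ j)))⁻¹ : ℝ) : ℂ)))
    (Matrix.fromBlocks
      (Matrix.diagonal fun i => ((Real.sqrt (Real.sin (k i)) : ℝ) : ℂ)) 0 0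
      (Matrix.diagonal fun j =>
        ((u j * Real.exp (γ j) * (Real.sqrt (2 * Real.sinh (γ j)))⁻¹ : ℝ) : ℂ)))

/-- The coefficient part of `Mmat` (the second factor). -/
noncomputable def Bco (s h : ℕ) (k : Fin s → ℝ) (γ u : Fin h → ℝ) :
    Matrix ((Fin s ⊕ Fin h) ⊕ (Fin s ⊕ Fin h)) ((Fin s ⊕ Fin h) ⊕ (Fin s ⊕ Fin h)) ℂ :=
  Matrix.fromBlocks
    (Matrix.fromBlocks
      (Matrix.diagonal fun i => (((Real.sqrt (Real.sin (k i)))⁻¹ : ℝ) : ℂ)) 0 0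
      (Matrix.diagonal fun j => ((u j * (Real.sqrt (2 * Real.sinh (γ j)))⁻¹ : ℝ) : ℂ)))
    (Matrix.fromBlocks 0 0 0
      (Matrix.diagonal fun j => (((Real.sqrt (2 * Real.sinh (γ j)))⁻¹ : ℝ) : ℂ)))
    (Matrix.fromBlocks
      (Matrix.diagonal fun i =>
        ((Real.cos (k i) * (Real.sqrt (Real.sin (k i)))⁻¹ : ℝ) : ℂ)) 0 0
      (Matrix.diagonal fun j =>
        ((Real.exp (-γ j) * (Real.sqrt (2 * Real.sinh (γ j)))⁻¹ : ℝ) : ℂ)))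
    (Matrix.fromBlocks
      (Matrix.diagonal fun i => ((Real.sqrt (Real.sin (k i)) : ℝ) : ℂ)) 0 0
      (Matrix.diagonal fun j =>
        ((u j * Real.exp (γ j) * (Real.sqrt (2 * Real.sinh (γ j)))⁻¹ : ℝ) : ℂ)))

/-- The explicit inverse of `Bco`. -/
noncomputable def Bin (s h : ℕ) (k : Fin s → ℝ) (γ u : Fin h → ℝ) :
    Matrix ((Fin s ⊕ Fin h) ⊕ (Fin s ⊕ Fin h)) ((Fin s ⊕ Fin h) ⊕ (Fin s ⊕ Fin h)) ℂ :=
  Matrix.fromBlocks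
    (Matrix.fromBlocks
      (Matrix.diagonal fun i => ((Real.sqrt (Real.sin (k i)) : ℝ) : ℂ)) 0 0
      (Matrix.diagonal fun j =>
        ((u j * Real.exp (γ j) * (Real.sqrt (2 * Real.sinh (γ j)))⁻¹ : ℝ) : ℂ)))
    (Matrix.fromBlocks 0 0 0
      (Matrix.diagonal fun j => ((-(Real.sqrt (2 * Real.sinh (γ j)))⁻¹ : ℝ) : ℂ)))
    (Matrix.fromBlocks
      (Matrix.diagonal fun i =>
        ((-(Real.cos (k i) * (Real.sqrt (Real.sin (k i)))⁻¹) : ℝ) : ℂ)) 0 0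
      (Matrix.diagonal fun j =>
        ((-(Real.exp (-γ j) * (Real.sqrt (2 * Real.sinh (γ j)))⁻¹) : ℝ) : ℂ)))
    (Matrix.fromBlocks
      (Matrix.diagonal fun i => (((Real.sqrt (Real.sin (k i)))⁻¹ : ℝ) : ℂ)) 0 0
      (Matrix.diagonal fun j => ((u j * (Real.sqrt (2 * Real.sinh (γ j)))⁻¹ : ℝ) : ℂ)))

lemma Bin_mul_Bco (s h : ℕ) (k : Fin s → ℝ) (γ u : Fin h → ℝ)
    (hk : ∀ i, k i ∈ Set.Ioo 0 Real.pi) (hγ : ∀ j, 0 < γ j)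
    (hu : ∀ j, u j = 1 ∨ u j = -1) :
    Bin s h k γ u * Bco s h k γ u = 1 := by
  rw [Bin, Bco, fromBlocks_multiply]
  simp only [fromBlocks_multiply, Matrix.mul_zero, Matrix.zero_mul, add_zero, zero_add,
    Matrix.fromBlocks_add, diagonal_mul_diagonal, diagonal_add]
  rw [show (1 : Matrix ((Fin s ⊕ Fin h) ⊕ (Fin s ⊕ Fin h)) _ ℂ) =
      fromBlocks
        (fromBlocks (diagonal fun _ => 1) 0 0 (diagonal fun _ => 1))
        (fromBlocks 0 0 0 0) (fromBlocks 0 0 0 0)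
        (fromBlocks (diagonal fun _ => 1) 0 0 (diagonal fun _ => 1)) by
    simp only [diagonal_one, fromBlocks_zero, fromBlocks_one]]
  simp only [fromBlocks_inj]
  refine ⟨⟨?_, trivial, trivial, ?_⟩, ⟨trivial, trivial, trivial, ?_⟩, ⟨?_, trivial, trivial, ?_⟩, ⟨?_, trivial, trivial, ?_⟩⟩
  · refine congrArg Matrix.diagonal (funext fun i => ?_)
    have hs := Real.sin_pos_of_pos_of_lt_pi (hk i).1 (hk i).2
    have ht := Real.mul_self_sqrt hs.le
    have htr := mul_inv_cancel₀ (Real.sqrt_pos.2 hs).ne'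
    have hpy := Real.sin_sq_add_cos_sq (k i)
    norm_cast
    try linear_combination htr
  · refine congrArg Matrix.diagonal (funext fun i => ?_)
    have hS := Real.sinh_pos_iff.2 (hγ i)
    have hq : Real.sqrt (2 * Real.sinh (γ i)) * Real.sqrt (2 * Real.sinh (γ i))
          = 2 * Real.sinh (γ i) := Real.mul_self_sqrt (by linarith)
    have hr : Real.sqrt (2 * Real.sinh (γ i)) * (Real.sqrt (2 * Real.sinh (γ i)))⁻¹ = 1 :=
        mul_inv_cancel₀ (Real.sqrt_pos.2 (by linarith)).ne'
    have hu2 : u i * u i = 1 := by rcases hu i with h' | h' <;> rw [h'] <;> norm_num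
    have hee : Real.exp (γ i) * Real.exp (-γ i) = 1 := by rw [← Real.exp_add]; simp
    have hcosh : Real.cosh (γ i) * 2 = Real.exp (γ i) + Real.exp (-γ i) := by
        rw [Real.cosh_eq]; ring
    have hsinh : Real.sinh (γ i) * 2 = Real.exp (γ i) - Real.exp (-γ i) := by
        rw [Real.sinh_eq]; ring
    norm_cast
    try linear_combination (Real.exp (γ i) * ((Real.sqrt (2 * Real.sinh (γ i)))⁻¹)^2) * hu2 - ((Real.sqrt (2 * Real.sinh (γ i)))⁻¹)^2 * hsinh - ((Real.sqrt (2 * Real.sinh (γ i)))⁻¹)^2 * hq + (Real.sqrt (2 * Real.sinh (γ i)) * (Real.sqrt (2 * Real.sinh (γ i)))⁻¹ + 1) * hr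
  · refine (congrArg Matrix.diagonal (funext fun i => ?_)).trans Matrix.diagonal_zero
    push_cast
    ring
  · refine (congrArg Matrix.diagonal (funext fun i => ?_)).trans Matrix.diagonal_zero
    push_cast
    ring
  · refine (congrArg Matrix.diagonal (funext fun i => ?_)).trans Matrix.diagonal_zero
    push_cast
    ring
  · refine congrArg Matrix.diagonal (funext fun i => ?_)
    have hs := Real.sin_pos_of_pos_of_lt_pi (hk i).1 (hk i).2
    have ht := Real.mul_self_sqrt hs.le
    have htr := mul_inv_cancel₀ (Real.sqrt_pos.2 hs).ne'
    have hpy := Real.sin_sq_add_cos_sq (k i)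
    norm_cast
    try linear_combination htr
  · refine congrArg Matrix.diagonal (funext fun i => ?_)
    have hS := Real.sinh_pos_iff.2 (hγ i)
    have hq : Real.sqrt (2 * Real.sinh (γ i)) * Real.sqrt (2 * Real.sinh (γ i))
          = 2 * Real.sinh (γ i) := Real.mul_self_sqrt (by linarith)
    have hr : Real.sqrt (2 * Real.sinh (γ i)) * (Real.sqrt (2 * Real.sinh (γ i)))⁻¹ = 1 :=
        mul_inv_cancel₀ (Real.sqrt_pos.2 (by linarith)).ne'
    have hu2 : u i * u i = 1 := by rcases hu i with h' | h' <;> rw [h'] <;> norm_num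
    have hee : Real.exp (γ i) * Real.exp (-γ i) = 1 := by rw [← Real.exp_add]; simp
    have hcosh : Real.cosh (γ i) * 2 = Real.exp (γ i) + Real.exp (-γ i) := by
        rw [Real.cosh_eq]; ring
    have hsinh : Real.sinh (γ i) * 2 = Real.exp (γ i) - Real.exp (-γ i) := by
        rw [Real.sinh_eq]; ring
    norm_cast
    try linear_combination (Real.exp (γ i) * ((Real.sqrt (2 * Real.sinh (γ i)))⁻¹)^2) * hu2 - ((Real.sqrt (2 * Real.sinh (γ i)))⁻¹)^2 * hsinh - ((Real.sqrt (2 * Real.sinh (γ i)))⁻¹)^2 * hq + (Real.sqrt (2 * Real.sinh (γ i)) * (Real.sqrt (2 * Real.sinh (γ i)))⁻¹ + 1) * hr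

lemma key_conj (s h : ℕ) (k : Fin s → ℝ) (γ u : Fin h → ℝ)
    (hk : ∀ i, k i ∈ Set.Ioo 0 Real.pi) (hγ : ∀ j, 0 < γ j)
    (hu : ∀ j, u j = 1 ∨ u j = -1) :
    Bin s h k γ u *
      Matrix.fromBlocks
        (Matrix.diagonal (Sum.elim (fun i => ((2 * Real.cos (k i) : ℝ) : ℂ))
          (fun j => ((2 * u j * Real.cosh (γ j) : ℝ) : ℂ)))) (-1) 1 0 *
      Bco s h k γ u =
    Matrix.fromBlocks
      (Matrix.fromBlocks (Matrix.diagonal fun i => ((Real.cos (k i) : ℝ) : ℂ)) 0 0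
        (Matrix.diagonal fun j => ((u j * Real.exp (γ j) : ℝ) : ℂ)))
      (Matrix.fromBlocks (-(Matrix.diagonal fun i => ((Real.sin (k i) : ℝ) : ℂ))) 0 0 0)
      (Matrix.fromBlocks (Matrix.diagonal fun i => ((Real.sin (k i) : ℝ) : ℂ)) 0 0 0)
      (Matrix.fromBlocks (Matrix.diagonal fun i => ((Real.cos (k i) : ℝ) : ℂ)) 0 0
        (Matrix.diagonal fun j => ((u j * Real.exp (-γ j) : ℝ) : ℂ))) := by
  rw [← fromBlocks_diagonal, Bin, Bco]
  simp only [fromBlocks_multiply, Matrix.mul_zero, Matrix.zero_mul, add_zero, zero_add,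
    Matrix.mul_neg, Matrix.neg_mul, Matrix.mul_one, Matrix.one_mul,
    Matrix.fromBlocks_add, Matrix.fromBlocks_neg, neg_zero,
    diagonal_mul_diagonal, diagonal_add, diagonal_neg]
  simp only [fromBlocks_inj]
  refine ⟨⟨?_, trivial, trivial, ?_⟩, ⟨?_, trivial, trivial, ?_⟩, ⟨?_, trivial, trivial, ?_⟩, ⟨?_, trivial, trivial, ?_⟩⟩
  · refine congrArg Matrix.diagonal (funext fun i => ?_)
    have hs := Real.sin_pos_of_pos_of_lt_pi (hk i).1 (hk i).2
    have ht := Real.mul_self_sqrt hs.le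
    have htr := mul_inv_cancel₀ (Real.sqrt_pos.2 hs).ne'
    have hpy := Real.sin_sq_add_cos_sq (k i)
    norm_cast
    try linear_combination Real.cos (k i) * htr
  · refine congrArg Matrix.diagonal (funext fun i => ?_)
    have hS := Real.sinh_pos_iff.2 (hγ i)
    have hq : Real.sqrt (2 * Real.sinh (γ i)) * Real.sqrt (2 * Real.sinh (γ i))
          = 2 * Real.sinh (γ i) := Real.mul_self_sqrt (by linarith)
    have hr : Real.sqrt (2 * Real.sinh (γ i)) * (Real.sqrt (2 * Real.sinh (γ i)))⁻¹ = 1 :=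
        mul_inv_cancel₀ (Real.sqrt_pos.2 (by linarith)).ne'
    have hu2 : u i * u i = 1 := by rcases hu i with h' | h' <;> rw [h'] <;> norm_num
    have hee : Real.exp (γ i) * Real.exp (-γ i) = 1 := by rw [← Real.exp_add]; simp
    have hcosh : Real.cosh (γ i) * 2 = Real.exp (γ i) + Real.exp (-γ i) := by
        rw [Real.cosh_eq]; ring
    have hsinh : Real.sinh (γ i) * 2 = Real.exp (γ i) - Real.exp (-γ i) := by
        rw [Real.sinh_eq]; ring
    norm_cast
    try linear_combination (2 * u i * Real.cosh (γ i) * Real.exp (γ i) * ((Real.sqrt (2 * Real.sinh (γ i)))⁻¹)^2) * hu2 + (u i * ((Real.sqrt (2 * Real.sinh (γ i)))⁻¹)^2) * hee + (u i * Real.exp (γ i) * ((Real.sqrt (2 * Real.sinh (γ i)))⁻¹)^2) * hcosh - (u i * Real.exp (γ i) * ((Real.sqrt (2 * Real.sinh (γ i)))⁻¹)^2) * hsinh - (u i * Real.exp (γ i) * ((Real.sqrt (2 * Real.sinh (γ i)))⁻¹)^2) * hq + (u i * Real.exp (γ i) * (Real.sqrt (2 * Real.sinh (γ i)) * (Real.sqrt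 (2 * Real.sinh (γ i)))⁻¹ + 1)) * hr
  · refine congrArg Matrix.diagonal (funext fun i => ?_)
    have hs := Real.sin_pos_of_pos_of_lt_pi (hk i).1 (hk i).2
    have ht := Real.mul_self_sqrt hs.le
    have htr := mul_inv_cancel₀ (Real.sqrt_pos.2 hs).ne'
    have hpy := Real.sin_sq_add_cos_sq (k i)
    norm_cast
    try linear_combination -ht
  · refine (congrArg Matrix.diagonal (funext fun i => ?_)).trans Matrix.diagonal_zero
    have hS := Real.sinh_pos_iff.2 (hγ i)
    have hq : Real.sqrt (2 * Real.sinh (γ i)) * Real.sqrt (2 * Real.sinh (γ i))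
          = 2 * Real.sinh (γ i) := Real.mul_self_sqrt (by linarith)
    have hr : Real.sqrt (2 * Real.sinh (γ i)) * (Real.sqrt (2 * Real.sinh (γ i)))⁻¹ = 1 :=
        mul_inv_cancel₀ (Real.sqrt_pos.2 (by linarith)).ne'
    have hu2 : u i * u i = 1 := by rcases hu i with h' | h' <;> rw [h'] <;> norm_num
    have hee : Real.exp (γ i) * Real.exp (-γ i) = 1 := by rw [← Real.exp_add]; simp
    have hcosh : Real.cosh (γ i) * 2 = Real.exp (γ i) + Real.exp (-γ i) := by
        rw [Real.cosh_eq]; ring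
    have hsinh : Real.sinh (γ i) * 2 = Real.exp (γ i) - Real.exp (-γ i) := by
        rw [Real.sinh_eq]; ring
    norm_cast
    try linear_combination ((2 * Real.cosh (γ i) * Real.exp (γ i) - Real.exp (γ i)^2) * ((Real.sqrt (2 * Real.sinh (γ i)))⁻¹)^2) * hu2 + (Real.exp (γ i) * ((Real.sqrt (2 * Real.sinh (γ i)))⁻¹)^2) * hcosh + ((Real.sqrt (2 * Real.sinh (γ i)))⁻¹)^2 * hee
  · refine congrArg Matrix.diagonal (funext fun i => ?_)
    have hs := Real.sin_pos_of_pos_of_lt_pi (hk i).1 (hk i).2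
    have ht := Real.mul_self_sqrt hs.le
    have htr := mul_inv_cancel₀ (Real.sqrt_pos.2 hs).ne'
    have hpy := Real.sin_sq_add_cos_sq (k i)
    norm_cast
    try linear_combination (-(((Real.sqrt (Real.sin (k i)))⁻¹)^2)) * hpy - (Real.sin (k i) * ((Real.sqrt (Real.sin (k i)))⁻¹)^2) * ht + (Real.sin (k i) * (Real.sqrt (Real.sin (k i)) * (Real.sqrt (Real.sin (k i)))⁻¹ + 1)) * htr
  · refine (congrArg Matrix.diagonal (funext fun i => ?_)).trans Matrix.diagonal_zero
    have hS := Real.sinh_pos_iff.2 (hγ i)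
    have hq : Real.sqrt (2 * Real.sinh (γ i)) * Real.sqrt (2 * Real.sinh (γ i))
          = 2 * Real.sinh (γ i) := Real.mul_self_sqrt (by linarith)
    have hr : Real.sqrt (2 * Real.sinh (γ i)) * (Real.sqrt (2 * Real.sinh (γ i)))⁻¹ = 1 :=
        mul_inv_cancel₀ (Real.sqrt_pos.2 (by linarith)).ne'
    have hu2 : u i * u i = 1 := by rcases hu i with h' | h' <;> rw [h'] <;> norm_num
    have hee : Real.exp (γ i) * Real.exp (-γ i) = 1 := by rw [← Real.exp_add]; simp
    have hcosh : Real.cosh (γ i) * 2 = Real.exp (γ i) + Real.exp (-γ i) := by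
        rw [Real.cosh_eq]; ring
    have hsinh : Real.sinh (γ i) * 2 = Real.exp (γ i) - Real.exp (-γ i) := by
        rw [Real.sinh_eq]; ring
    norm_cast
    try linear_combination ((-2 * Real.cosh (γ i) * Real.exp (-γ i) + 1) * ((Real.sqrt (2 * Real.sinh (γ i)))⁻¹)^2) * hu2 - (Real.exp (-γ i) * ((Real.sqrt (2 * Real.sinh (γ i)))⁻¹)^2) * hcosh - ((Real.sqrt (2 * Real.sinh (γ i)))⁻¹)^2 * hee
  · refine congrArg Matrix.diagonal (funext fun i => ?_)
    have hs := Real.sin_pos_of_pos_of_lt_pi (hk i).1 (hk i).2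
    have ht := Real.mul_self_sqrt hs.le
    have htr := mul_inv_cancel₀ (Real.sqrt_pos.2 hs).ne'
    have hpy := Real.sin_sq_add_cos_sq (k i)
    norm_cast
    try linear_combination Real.cos (k i) * htr
  · refine congrArg Matrix.diagonal (funext fun i => ?_)
    have hS := Real.sinh_pos_iff.2 (hγ i)
    have hq : Real.sqrt (2 * Real.sinh (γ i)) * Real.sqrt (2 * Real.sinh (γ i))
          = 2 * Real.sinh (γ i) := Real.mul_self_sqrt (by linarith)
    have hr : Real.sqrt (2 * Real.sinh (γ i)) * (Real.sqrt (2 * Real.sinh (γ i)))⁻¹ = 1 :=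
        mul_inv_cancel₀ (Real.sqrt_pos.2 (by linarith)).ne'
    have hu2 : u i * u i = 1 := by rcases hu i with h' | h' <;> rw [h'] <;> norm_num
    have hee : Real.exp (γ i) * Real.exp (-γ i) = 1 := by rw [← Real.exp_add]; simp
    have hcosh : Real.cosh (γ i) * 2 = Real.exp (γ i) + Real.exp (-γ i) := by
        rw [Real.cosh_eq]; ring
    have hsinh : Real.sinh (γ i) * 2 = Real.exp (γ i) - Real.exp (-γ i) := by
        rw [Real.sinh_eq]; ring
    norm_cast
    try linear_combination (-(u i) * ((Real.sqrt (2 * Real.sinh (γ i)))⁻¹)^2) * hee - (u i * Real.exp (-γ i) * ((Real.sqrt (2 * Real.sinh (γ i)))⁻¹)^2) * hcosh - (u i * Real.exp (-γ i) * ((Real.sqrt (2 * Real.sinh (γ i)))⁻¹)^2) * hsinh - (u i * Real.exp (-γ i) * ((Real.sqrt (2 * Real.sinh (γ i)))⁻¹)^2) * hq + (u i * Real.exp (-γ i) * (Real.sqrt (2 * Real.sinh (γ i)) * (Real.sqrt (2 * Real.sinh (γ i)))⁻¹ + 1)) * hr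

/-- Symplectic normal form of the free transfer matrix:
    M⁻¹ 𝒯⁰ M = [[cos k,0,−sin k,0],[0,u e^γ,0,0],[sin k,0,cos k,0],[0,0,0,u e^{−γ}]]. -/
theorem stmt10 (s h : ℕ) (lam : Fin s ⊕ Fin h → ℝ) (E : ℝ)
    (k : Fin s → ℝ) (γ u : Fin h → ℝ)
    (U : Matrix (Fin s ⊕ Fin h) (Fin s ⊕ Fin h) ℂ)
    (hU : U ∈ Matrix.unitaryGroup (Fin s ⊕ Fin h) ℂ)
    (hk : ∀ i, k i ∈ Set.Ioo 0 Real.pi ∧ E = -2 * Real.cos (k i) + lam (Sum.inl i))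
    (hγ : ∀ j, 0 < γ j) (hu : ∀ j, u j = 1 ∨ u j = -1)
    (hEh : ∀ j, E = -2 * u j * Real.cosh (γ j) + lam (Sum.inr j)) :
    ∀ (W : Matrix (Fin s ⊕ Fin h) (Fin s ⊕ Fin h) ℂ),
      W = U * Matrix.diagonal (fun i => (lam i : ℂ)) * Uᴴ →
    (Mmat s h k γ u U)⁻¹ * Matrix.fromBlocks (W - (E : ℂ) • 1) (-1) 1 0 * Mmat s h k γ u U =
      Matrix.fromBlocks
        (Matrix.fromBlocks (Matrix.diagonal fun i => ((Real.cos (k i) : ℝ) : ℂ)) 0 0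
          (Matrix.diagonal fun j => ((u j * Real.exp (γ j) : ℝ) : ℂ)))
        (Matrix.fromBlocks (-(Matrix.diagonal fun i => ((Real.sin (k i) : ℝ) : ℂ))) 0 0 0)
        (Matrix.fromBlocks (Matrix.diagonal fun i => ((Real.sin (k i) : ℝ) : ℂ)) 0 0 0)
        (Matrix.fromBlocks (Matrix.diagonal fun i => ((Real.cos (k i) : ℝ) : ℂ)) 0 0
          (Matrix.diagonal fun j => ((u j * Real.exp (-γ j) : ℝ) : ℂ))) := by
  intro W hW
  have h1U : Uᴴ * U = 1 := by
    have := hU.1; rwa [Matrix.star_eq_conjTranspose] at this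
  have hMeq : Mmat s h k γ u U = fromBlocks U 0 0 U * Bco s h k γ u := rfl
  have hAA : fromBlocks Uᴴ 0 0 Uᴴ * fromBlocks U 0 0 U
      = (1 : Matrix ((Fin s ⊕ Fin h) ⊕ (Fin s ⊕ Fin h)) _ ℂ) := by
    rw [fromBlocks_multiply]
    simp [h1U, fromBlocks_one]
  have hMinv : (Mmat s h k γ u U)⁻¹ = Bin s h k γ u * fromBlocks Uᴴ 0 0 Uᴴ := by
    apply Matrix.inv_eq_left_inv
    rw [hMeq, Matrix.mul_assoc, ← Matrix.mul_assoc (fromBlocks Uᴴ 0 0 Uᴴ), hAA,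
      Matrix.one_mul]
    exact Bin_mul_Bco s h k γ u (fun i => (hk i).1) hγ hu
  have hWE : Uᴴ * (W - (E : ℂ) • 1) * U
      = Matrix.diagonal (Sum.elim (fun i => ((2 * Real.cos (k i) : ℝ) : ℂ))
          (fun j => ((2 * u j * Real.cosh (γ j) : ℝ) : ℂ))) := by
    rw [hW]
    have e1 : Uᴴ * (U * Matrix.diagonal (fun i => (lam i : ℂ)) * Uᴴ - (E : ℂ) • 1) * U
        = (Uᴴ * U) * Matrix.diagonal (fun i => (lam i : ℂ)) * (Uᴴ * U)
          - (E : ℂ) • (Uᴴ * U) := by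
      rw [Matrix.mul_sub, Matrix.sub_mul, Matrix.mul_smul, Matrix.smul_mul, Matrix.mul_one]
      simp only [Matrix.mul_assoc]
    rw [e1, h1U, Matrix.one_mul, Matrix.mul_one]
    have e2 : (E : ℂ) • (1 : Matrix (Fin s ⊕ Fin h) (Fin s ⊕ Fin h) ℂ)
        = Matrix.diagonal (fun _ => (E : ℂ)) := by
      rw [← diagonal_one, ← diagonal_smul]
      refine congrArg Matrix.diagonal (funext fun x => ?_)
      simp [Pi.smul_apply, smul_eq_mul]
    rw [e2, diagonal_sub]
    refine congrArg Matrix.diagonal (funext fun x => ?_)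
    cases x with
    | inl i =>
      have h2 := (hk i).2
      have : lam (Sum.inl i) - E = 2 * Real.cos (k i) := by linarith
      simp only [Sum.elim_inl]
      exact_mod_cast congrArg (fun t : ℝ => (t : ℂ)) this
    | inr j =>
      have h2 := hEh j
      have : lam (Sum.inr j) - E = 2 * u j * Real.cosh (γ j) := by linarith
      simp only [Sum.elim_inr]
      exact_mod_cast congrArg (fun t : ℝ => (t : ℂ)) this
  have hT : fromBlocks Uᴴ 0 0 Uᴴ * (Matrix.fromBlocks (W - (E : ℂ) • 1) (-1) 1 0 *
      fromBlocks U 0 0 U)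
      = Matrix.fromBlocks
          (Matrix.diagonal (Sum.elim (fun i => ((2 * Real.cos (k i) : ℝ) : ℂ))
            (fun j => ((2 * u j * Real.cosh (γ j) : ℝ) : ℂ)))) (-1) 1 0 := by
    rw [fromBlocks_multiply, fromBlocks_multiply]
    simp only [Matrix.mul_zero, Matrix.zero_mul, add_zero, zero_add, Matrix.neg_mul,
      Matrix.one_mul, Matrix.mul_one, Matrix.mul_neg]
    rw [fromBlocks_inj]
    refine ⟨?_, ?_, h1U, neg_zero⟩
    · rw [← Matrix.mul_assoc, hWE]
    · rw [h1U]
  rw [hMinv, hMeq]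
  calc Bin s h k γ u * fromBlocks Uᴴ 0 0 Uᴴ * Matrix.fromBlocks (W - (E : ℂ) • 1) (-1) 1 0 *
        (fromBlocks U 0 0 U * Bco s h k γ u)
      = Bin s h k γ u * (fromBlocks Uᴴ 0 0 Uᴴ * (Matrix.fromBlocks (W - (E : ℂ) • 1) (-1) 1 0 *
          fromBlocks U 0 0 U)) * Bco s h k γ u := by
        simp only [Matrix.mul_assoc]
  _ = Bin s h k γ u * Matrix.fromBlocks
        (Matrix.diagonal (Sum.elim (fun i => ((2 * Real.cos (k i) : ℝ) : ℂ))
          (fun j => ((2 * u j * Real.cosh (γ j) : ℝ) : ℂ)))) (-1) 1 0 * Bco s h k γ u := by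
        rw [hT]
  _ = _ := key_conj s h k γ u (fun i => (hk i).1) hγ hu
end

section
/- The matrix M built from the channel data (as in the normal-form construction) is conjugate symplectic: M* J_N M = J_N, where J_N = [[0,1],[−1,0]] in N×N blocks. -/
open Matrix


open Matrix

lemma diag_symp {ι : Type*} [Fintype ι] [DecidableEq ι] (a b c d : ι → ℂ)
    (ha : ∀ i, star (a i) = a i) (hb : ∀ i, star (b i) = b i)
    (hc : ∀ i, star (c i) = c i) (hd : ∀ i, star (d i) = d i)
    (habcd : ∀ i, a i * d i - c i * b i = 1) :
    (Matrix.fromBlocks (Matrix.diagonal a) (Matrix.diagonal b)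
        (Matrix.diagonal c) (Matrix.diagonal d))ᴴ * Jm ι *
      Matrix.fromBlocks (Matrix.diagonal a) (Matrix.diagonal b)
        (Matrix.diagonal c) (Matrix.diagonal d) = Jm ι := by
  have hA : (Matrix.diagonal a)ᴴ = Matrix.diagonal a := by
    rw [Matrix.diagonal_conjTranspose]; exact congrArg _ (funext ha)
  have hB : (Matrix.diagonal b)ᴴ = Matrix.diagonal b := by
    rw [Matrix.diagonal_conjTranspose]; exact congrArg _ (funext hb)
  have hC : (Matrix.diagonal c)ᴴ = Matrix.diagonal c := by
    rw [Matrix.diagonal_conjTranspose]; exact congrArg _ (funext hc)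
  have hD : (Matrix.diagonal d)ᴴ = Matrix.diagonal d := by
    rw [Matrix.diagonal_conjTranspose]; exact congrArg _ (funext hd)
  simp only [Jm, Matrix.fromBlocks_conjTranspose, hA, hB, hC, hD,
    Matrix.fromBlocks_multiply, Matrix.diagonal_mul_diagonal,
    Matrix.mul_zero, Matrix.zero_mul, Matrix.mul_one, Matrix.one_mul,
    Matrix.mul_neg, Matrix.neg_mul, zero_add, add_zero, neg_zero]
  have e1 : (-Matrix.diagonal fun i => c i * a i) + (Matrix.diagonal fun i => a i * c i)
      = (0 : Matrix ι ι ℂ) := by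
    ext i j
    by_cases hij : i = j <;> simp [Matrix.diagonal_apply, hij, mul_comm]
  have e2 : (-Matrix.diagonal fun i => c i * b i) + (Matrix.diagonal fun i => a i * d i)
      = (1 : Matrix ι ι ℂ) := by
    ext i j
    by_cases hij : i = j
    · subst hij
      simp only [Matrix.add_apply, Matrix.neg_apply, Matrix.diagonal_apply_eq,
        Matrix.one_apply_eq]
      linear_combination habcd i
    · simp [Matrix.diagonal_apply_ne _ hij, Matrix.one_apply_ne hij]
  have e3 : (-Matrix.diagonal fun i => d i * a i) + (Matrix.diagonal fun i => b i * c i)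
      = (-1 : Matrix ι ι ℂ) := by
    ext i j
    by_cases hij : i = j
    · subst hij
      simp only [Matrix.add_apply, Matrix.neg_apply, Matrix.diagonal_apply_eq,
        Matrix.one_apply_eq]
      linear_combination -habcd i
    · simp [Matrix.diagonal_apply_ne _ hij, Matrix.one_apply_ne hij]
  have e4 : (-Matrix.diagonal fun i => d i * b i) + (Matrix.diagonal fun i => b i * d i)
      = (0 : Matrix ι ι ℂ) := by
    ext i j
    by_cases hij : i = j <;> simp [Matrix.diagonal_apply, hij, mul_comm]
  rw [e1, e2, e3, e4]

/-- The basis matrix M is conjugate symplectic: M* J M = J. -/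
theorem stmt11 (s h : ℕ) (k : Fin s → ℝ) (γ u : Fin h → ℝ)
    (U : Matrix (Fin s ⊕ Fin h) (Fin s ⊕ Fin h) ℂ)
    (hU : U ∈ Matrix.unitaryGroup (Fin s ⊕ Fin h) ℂ)
    (hk : ∀ i, k i ∈ Set.Ioo 0 Real.pi)
    (hγ : ∀ j, 0 < γ j) (hu : ∀ j, u j = 1 ∨ u j = -1) :
    (Mmat s h k γ u U)ᴴ * Jm (Fin s ⊕ Fin h) * Mmat s h k γ u U = Jm (Fin s ⊕ Fin h) := by
  have hUU : Uᴴ * U = 1 := by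
    have := hU.1
    simpa [Matrix.star_eq_conjTranspose] using this
  set a : (Fin s ⊕ Fin h) → ℂ :=
    Sum.elim (fun i => (((Real.sqrt (Real.sin (k i)))⁻¹ : ℝ) : ℂ))
      (fun j => ((u j * (Real.sqrt (2 * Real.sinh (γ j)))⁻¹ : ℝ) : ℂ)) with ha_def
  set b : (Fin s ⊕ Fin h) → ℂ :=
    Sum.elim (fun _ => (0 : ℂ))
      (fun j => (((Real.sqrt (2 * Real.sinh (γ j)))⁻¹ : ℝ) : ℂ)) with hb_def
  set c : (Fin s ⊕ Fin h) → ℂ :=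
    Sum.elim (fun i => ((Real.cos (k i) * (Real.sqrt (Real.sin (k i)))⁻¹ : ℝ) : ℂ))
      (fun j => ((Real.exp (-γ j) * (Real.sqrt (2 * Real.sinh (γ j)))⁻¹ : ℝ) : ℂ)) with hc_def
  set d : (Fin s ⊕ Fin h) → ℂ :=
    Sum.elim (fun i => ((Real.sqrt (Real.sin (k i)) : ℝ) : ℂ))
      (fun j => ((u j * Real.exp (γ j) * (Real.sqrt (2 * Real.sinh (γ j)))⁻¹ : ℝ) : ℂ)) with hd_def
  have hM : Mmat s h k γ u U = Matrix.fromBlocks U 0 0 U *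
      Matrix.fromBlocks (Matrix.diagonal a) (Matrix.diagonal b)
        (Matrix.diagonal c) (Matrix.diagonal d) := by
    rw [Mmat, ha_def, hb_def, hc_def, hd_def, ← Matrix.fromBlocks_diagonal,
      ← Matrix.fromBlocks_diagonal, ← Matrix.fromBlocks_diagonal,
      ← Matrix.fromBlocks_diagonal, Matrix.diagonal_zero]
  have hP : (Matrix.fromBlocks U 0 0 U)ᴴ * Jm (Fin s ⊕ Fin h) * Matrix.fromBlocks U 0 0 U
      = Jm (Fin s ⊕ Fin h) := by
    simp [Jm, Matrix.fromBlocks_conjTranspose, Matrix.fromBlocks_multiply, hUU]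
  rw [hM, Matrix.conjTranspose_mul]
  have rearr : ∀ (P B J : Matrix ((Fin s ⊕ Fin h) ⊕ (Fin s ⊕ Fin h))
      ((Fin s ⊕ Fin h) ⊕ (Fin s ⊕ Fin h)) ℂ),
      Bᴴ * Pᴴ * J * (P * B) = Bᴴ * (Pᴴ * J * P) * B := by
    intros; simp only [Matrix.mul_assoc]
  rw [rearr, hP]
  apply diag_symp
  · rintro (i | j) <;>
      simp only [ha_def, Sum.elim_inl, Sum.elim_inr, Complex.star_def, Complex.conj_ofReal]
  · rintro (i | j) <;>
      simp only [hb_def, Sum.elim_inl, Sum.elim_inr, Complex.star_def, Complex.conj_ofReal,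
        star_zero, map_zero]
  · rintro (i | j) <;>
      simp only [hc_def, Sum.elim_inl, Sum.elim_inr, Complex.star_def, Complex.conj_ofReal]
  · rintro (i | j) <;>
      simp only [hd_def, Sum.elim_inl, Sum.elim_inr, Complex.star_def, Complex.conj_ofReal]
  · rintro (i | j)
    · have hs : 0 < Real.sin (k i) := Real.sin_pos_of_pos_of_lt_pi (hk i).1 (hk i).2
      have h1 : (Real.sqrt (Real.sin (k i)))⁻¹ * Real.sqrt (Real.sin (k i)) = 1 :=
        inv_mul_cancel₀ (ne_of_gt (Real.sqrt_pos.mpr hs))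
      simp only [ha_def, hb_def, hc_def, hd_def, Sum.elim_inl]
      rw [← Complex.ofReal_mul, h1]
      simp
    · have hsh : 0 < Real.sinh (γ j) := Real.sinh_pos_iff.mpr (hγ j)
      have h2 : (0:ℝ) < 2 * Real.sinh (γ j) := by linarith
      have hrr : Real.sqrt (2 * Real.sinh (γ j)) * Real.sqrt (2 * Real.sinh (γ j))
          = 2 * Real.sinh (γ j) := Real.mul_self_sqrt h2.le
      have hinv : (Real.sqrt (2 * Real.sinh (γ j)))⁻¹ * (Real.sqrt (2 * Real.sinh (γ j)))⁻¹
          = (2 * Real.sinh (γ j))⁻¹ := by rw [← mul_inv, hrr]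
      have hu2 : u j * u j = 1 := by rcases hu j with hh | hh <;> rw [hh] <;> norm_num
      have h3 : 2 * Real.sinh (γ j) = Real.exp (γ j) - Real.exp (-γ j) := by
        rw [Real.sinh_eq]; ring
      have hreal : (u j * (Real.sqrt (2 * Real.sinh (γ j)))⁻¹) *
          (u j * Real.exp (γ j) * (Real.sqrt (2 * Real.sinh (γ j)))⁻¹) -
          (Real.exp (-γ j) * (Real.sqrt (2 * Real.sinh (γ j)))⁻¹) *
          (Real.sqrt (2 * Real.sinh (γ j)))⁻¹ = 1 := by
        calc (u j * (Real.sqrt (2 * Real.sinh (γ j)))⁻¹) *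
              (u j * Real.exp (γ j) * (Real.sqrt (2 * Real.sinh (γ j)))⁻¹) -
              (Real.exp (-γ j) * (Real.sqrt (2 * Real.sinh (γ j)))⁻¹) *
              (Real.sqrt (2 * Real.sinh (γ j)))⁻¹
            = (u j * u j) * Real.exp (γ j) *
                ((Real.sqrt (2 * Real.sinh (γ j)))⁻¹ * (Real.sqrt (2 * Real.sinh (γ j)))⁻¹) -
              Real.exp (-γ j) *
                ((Real.sqrt (2 * Real.sinh (γ j)))⁻¹ * (Real.sqrt (2 * Real.sinh (γ j)))⁻¹) := by
              ring
          _ = (2 * Real.sinh (γ j)) * (2 * Real.sinh (γ j))⁻¹ := by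
              rw [hu2, hinv]
              linear_combination -(2 * Real.sinh (γ j))⁻¹ * h3
          _ = 1 := mul_inv_cancel₀ h2.ne'
      simp only [ha_def, hb_def, hc_def, hd_def, Sum.elim_inr]
      rw [← Complex.ofReal_mul, ← Complex.ofReal_mul, ← Complex.ofReal_sub, hreal]
      simp
end

section
/- Let P(z) = z² + z(E + iε − λ) + 1 for real E, λ and ε ≠ 0. Then P has exactly one root ξ strictly inside the unit disc and one root strictly outside, and ξ · ξ' = 1 where ξ' is the other root. Moreover, if |E−λ| > 2 and u = sign(λ−E), then as ε → 0 the inner root converges to u·e^{−γ}, where γ > 0 satisfies E = −2u cosh γ + λ. -/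
/-!
The roots of `z² + b z + 1` are reciprocal, so exactly one of them lies inside the unit disc
unless one lies on the unit circle; a root `z` with `|z| = 1` forces `b = -(z + z̄)` to be real,
which fails for `Im b = ε ≠ 0`.

For `|E - λ| > 2` the unperturbed polynomial factors as `(z - c)(z - c⁻¹)` with `c = u e^{-γ}`.
For the perturbed one, `(z - c)(z - c⁻¹) = -iε z`, and for `|z| < 1` the factor `z - c⁻¹` stays
at distance at least `e^γ - 1` from `0`, so `|z - c| ≤ |ε| / (e^γ - 1)`.
-/

open Filter Topology

namespace Complex

variable {b z ξ : ℂ}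

lemma ne_zero_of_sq_add_mul_add_one_eq_zero (hz : z ^ 2 + z * b + 1 = 0) : z ≠ 0 := by
  rintro rfl
  norm_num at hz

lemma im_eq_zero_of_sq_add_mul_add_one_eq_zero_of_norm_eq_one
    (hz : z ^ 2 + z * b + 1 = 0) (h1 : ‖z‖ = 1) : b.im = 0 := by
  have hz0 := ne_zero_of_sq_add_mul_add_one_eq_zero hz
  have hb : b = -(z + z⁻¹) := by
    field_simp
    linear_combination hz
  rw [hb, inv_eq_conj h1]
  simp

lemma inv_sq_add_mul_add_one_eq_zero (hξ : ξ ^ 2 + ξ * b + 1 = 0) :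
    ξ⁻¹ ^ 2 + ξ⁻¹ * b + 1 = 0 := by
  have hξ0 := ne_zero_of_sq_add_mul_add_one_eq_zero hξ
  field_simp
  linear_combination hξ

lemma eq_or_eq_inv_of_sq_add_mul_add_one_eq_zero (hξ : ξ ^ 2 + ξ * b + 1 = 0)
    (hz : z ^ 2 + z * b + 1 = 0) : z = ξ ∨ z = ξ⁻¹ := by
  have hξ0 := ne_zero_of_sq_add_mul_add_one_eq_zero hξ
  have hfac : (z - ξ) * (z - ξ⁻¹) = 0 := by
    field_simp
    linear_combination ξ * hz - z * hξ
  rcases mul_eq_zero.mp hfac with h | h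
  · exact Or.inl (sub_eq_zero.mp h)
  · exact Or.inr (sub_eq_zero.mp h)

lemma exists_sq_add_mul_add_one_eq_zero_norm_lt_one (hb : b.im ≠ 0) :
    ∃ ξ : ℂ, ξ ^ 2 + ξ * b + 1 = 0 ∧ ‖ξ‖ < 1 := by
  obtain ⟨s, hs⟩ := IsAlgClosed.exists_eq_mul_self (discrim 1 b 1)
  obtain ⟨ξ, hξ⟩ := exists_quadratic_eq_zero one_ne_zero ⟨s, hs⟩
  replace hξ : ξ ^ 2 + ξ * b + 1 = 0 := by linear_combination hξ
  have h1 : ‖ξ‖ ≠ 1 := fun h ↦ hb (im_eq_zero_of_sq_add_mul_add_one_eq_zero_of_norm_eq_one hξ h)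
  rcases h1.lt_or_gt with h | h
  · exact ⟨ξ, hξ, h⟩
  · exact ⟨ξ⁻¹, inv_sq_add_mul_add_one_eq_zero hξ, by rw [norm_inv]; exact inv_lt_one_of_one_lt₀ h⟩

variable {c w : ℂ}

lemma norm_sub_mul_le_of_sq_add_mul_add_one_eq_zero (hc0 : c ≠ 0)
    (hz : z ^ 2 + z * (w - (c + c⁻¹)) + 1 = 0) (hz1 : ‖z‖ ≤ 1) :
    ‖z - c‖ * (‖c‖⁻¹ - 1) ≤ ‖w‖ := by
  have hfac : (z - c) * (z - c⁻¹) = -(w * z) := by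
    linear_combination hz + mul_inv_cancel₀ hc0
  have hfar : ‖c‖⁻¹ - 1 ≤ ‖z - c⁻¹‖ := by
    calc ‖c‖⁻¹ - 1 ≤ ‖c⁻¹‖ - ‖z‖ := by rw [norm_inv]; linarith
      _ ≤ ‖z - c⁻¹‖ := by rw [norm_sub_rev]; exact norm_sub_norm_le _ _
  calc ‖z - c‖ * (‖c‖⁻¹ - 1) ≤ ‖z - c‖ * ‖z - c⁻¹‖ := by gcongr
    _ = ‖w‖ * ‖z‖ := by rw [← norm_mul, hfac, norm_neg, norm_mul]
    _ ≤ ‖w‖ := mul_le_of_le_one_right (norm_nonneg w) hz1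

lemma tendsto_of_sq_add_mul_add_one_eq_zero {ι : Type*} {l : Filter ι} {w z : ι → ℂ}
    (hc0 : c ≠ 0) (hc : ‖c‖ < 1) (hw : Tendsto w l (𝓝 0))
    (hz : ∀ᶠ i in l, z i ^ 2 + z i * (w i - (c + c⁻¹)) + 1 = 0 ∧ ‖z i‖ ≤ 1) :
    Tendsto z l (𝓝 c) := by
  have hgap : 0 < ‖c‖⁻¹ - 1 := by
    rw [sub_pos]
    exact one_lt_inv₀ (norm_pos_iff.mpr hc0) |>.mpr hc
  rw [tendsto_iff_norm_sub_tendsto_zero]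
  refine squeeze_zero' (Eventually.of_forall fun _ ↦ norm_nonneg _) ?_
    ((hw.norm.div_const (‖c‖⁻¹ - 1)).trans (by rw [norm_zero, zero_div]))
  filter_upwards [hz] with i ⟨hroot, hle⟩
  rw [le_div_iff₀ hgap]
  exact norm_sub_mul_le_of_sq_add_mul_add_one_eq_zero hc0 hroot hle

end Complex

lemma Real.mul_exp_neg_add_inv {u : ℝ} (hu : u ^ 2 = 1) (γ : ℝ) :
    u * Real.exp (-γ) + (u * Real.exp (-γ))⁻¹ = 2 * u * Real.cosh γ := by
  have hu0 : u ≠ 0 := by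
    rintro rfl
    norm_num at hu
  rw [Real.cosh_eq, Real.exp_neg]
  field_simp
  linear_combination -(Real.exp γ ^ 2) * hu

/-- P(z) = z² + z(E + iε − λ) + 1 has exactly one root strictly inside the unit disc
    and one strictly outside, with product 1; for |E−λ| > 2 the inner root converges
    to u e^{−γ} as ε → 0. -/
theorem stmt14 (E lam : ℝ) :
    (∀ ε : ℝ, ε ≠ 0 →
      ∃ ξ ξ' : ℂ, ξ ≠ ξ' ∧
        ξ ^ 2 + ξ * ((E : ℂ) + ε * Complex.I - lam) + 1 = 0 ∧
        ξ' ^ 2 + ξ' * ((E : ℂ) + ε * Complex.I - lam) + 1 = 0 ∧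
        ‖ξ‖ < 1 ∧ 1 < ‖ξ'‖ ∧ ξ * ξ' = 1 ∧
        ∀ z : ℂ, z ^ 2 + z * ((E : ℂ) + ε * Complex.I - lam) + 1 = 0 → z = ξ ∨ z = ξ') ∧
    (∀ γ u : ℝ, 2 < |E - lam| → 0 < γ → u = (if 0 < lam - E then 1 else -1) →
      E = -2 * u * Real.cosh γ + lam →
      ∀ ξf : ℝ → ℂ,
        (∀ ε : ℝ, ε ≠ 0 →
          (ξf ε) ^ 2 + (ξf ε) * ((E : ℂ) + ε * Complex.I - lam) + 1 = 0 ∧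
          ‖ξf ε‖ < 1) →
        Tendsto ξf (𝓝[≠] (0 : ℝ)) (𝓝 ((u : ℂ) * Real.exp (-γ)))) := by
  constructor
  · intro ε hε
    obtain ⟨ξ, hξ, hξ1⟩ := Complex.exists_sq_add_mul_add_one_eq_zero_norm_lt_one
      (b := (E : ℂ) + ε * Complex.I - lam) (by simpa using hε)
    have hξ0 := Complex.ne_zero_of_sq_add_mul_add_one_eq_zero hξ
    have hξ'1 : 1 < ‖ξ⁻¹‖ := by rw [norm_inv]; exact one_lt_inv₀ (norm_pos_iff.mpr hξ0) |>.mpr hξ1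
    refine ⟨ξ, ξ⁻¹, fun h ↦ by rw [← h] at hξ'1; linarith, hξ,
      Complex.inv_sq_add_mul_add_one_eq_zero hξ, hξ1, hξ'1, mul_inv_cancel₀ hξ0,
      fun z hz ↦ Complex.eq_or_eq_inv_of_sq_add_mul_add_one_eq_zero hξ hz⟩
  · intro γ u _ hγ hu hE ξf hξf
    have hu1 : |u| = 1 := by rw [hu]; split_ifs <;> norm_num
    have hc_norm : ‖(u : ℂ) * Real.exp (-γ)‖ = Real.exp (-γ) := by
      rw [← Complex.ofReal_mul, Complex.norm_real, Real.norm_eq_abs, abs_mul, hu1, one_mul,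
        abs_of_pos (Real.exp_pos _)]
    have hsum : (u : ℂ) * Real.exp (-γ) + ((u : ℂ) * Real.exp (-γ))⁻¹ = lam - E := by
      have hu2 : u ^ 2 = 1 := by rw [← sq_abs, hu1, one_pow]
      exact_mod_cast (Real.mul_exp_neg_add_inv hu2 γ).trans (by linarith)
    refine Complex.tendsto_of_sq_add_mul_add_one_eq_zero (w := fun ε : ℝ ↦ ε * Complex.I)
      (norm_pos_iff.mp (by rw [hc_norm]; exact Real.exp_pos _))
      (by rw [hc_norm, Real.exp_lt_one_iff]; linarith) ?_ ?_
    · exact ((Complex.continuous_ofReal.mul continuous_const).tendsto' 0 0 (by simp)).mono_left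
        nhdsWithin_le_nhds
    · filter_upwards [self_mem_nhdsWithin] with ε hε
      obtain ⟨hroot, hlt⟩ := hξf ε hε
      refine ⟨?_, hlt.le⟩
      rw [hsum]
      linear_combination hroot
end

section
/- Let P(z) = z² + z(E + iε − λ) + 1 with |E−λ| < 2, and let k ∈ (0,π) satisfy E = −2cos k + λ. Then the root ξ_ε of P inside the unit disc satisfies lim_{ε↘0} ξ_ε = e^{ik} and lim_{ε↗0} ξ_ε = e^{−ik}. -/
open Filter Topology Complex ComplexConjugate

/-!
Since `E - λ = -2 cos k`, the polynomial factors as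
`P(ξ) = (ξ - e^{ik}) (ξ - e^{-ik}) + iεξ`, so a root satisfies
`|ξ - e^{ik}| |ξ - e^{-ik}| = |ε| |ξ| ≤ |ε|`.
Dividing `P(ξ) = 0` by `ξ` and taking imaginary parts gives `Im ξ (1 - |ξ|²) = |ξ|² ε`, so inside
the unit disc `Im ξ` has the sign of `ε`. For `ε > 0` this keeps `ξ` at distance at least `sin k`
from `e^{-ik}`, whence `|ξ - e^{ik}| ≤ ε / sin k`; the case `ε < 0` is its complex conjugate.
-/

theorem Complex.sub_exp_mul_sub_exp_neg (z w : ℂ) :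
    (z - exp (I * w)) * (z - exp (-(I * w))) = z ^ 2 - 2 * cos w * z + 1 := by
  have hprod : exp (I * w) * exp (-(I * w)) = 1 := by rw [← exp_add]; simp
  rw [cos, neg_mul, mul_comm w I]
  linear_combination hprod

section RootOfQuadratic

variable {b ε : ℝ} {ξ : ℂ}

theorem ne_zero_of_root (h : ξ ^ 2 + ξ * (b + ε * I) + 1 = 0) : ξ ≠ 0 := by
  rintro rfl
  simp at h

theorem conj_root (h : ξ ^ 2 + ξ * (b + ε * I) + 1 = 0) :
    conj ξ ^ 2 + conj ξ * (b + (-ε : ℝ) * I) + 1 = 0 := by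
  simpa [map_add, map_mul, sub_eq_add_neg] using congrArg conj h

theorem im_mul_one_sub_normSq_of_root (h : ξ ^ 2 + ξ * (b + ε * I) + 1 = 0) :
    ξ.im * (1 - normSq ξ) = normSq ξ * ε := by
  have hre := congrArg re h
  have him := congrArg im h
  simp only [pow_two, add_re, add_im, mul_re, mul_im, ofReal_re, ofReal_im, I_re, I_im,
    one_re, one_im, zero_re, zero_im] at hre him
  rw [normSq_apply]
  linear_combination ξ.im * hre - ξ.re * him

theorem im_pos_of_root (hε : 0 < ε) (h : ξ ^ 2 + ξ * (b + ε * I) + 1 = 0) (hξ : ‖ξ‖ < 1) :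
    0 < ξ.im := by
  have hr : 0 < normSq ξ := normSq_pos.mpr (ne_zero_of_root h)
  have hr1 : normSq ξ < 1 := by
    rw [normSq_eq_norm_sq]
    nlinarith [norm_nonneg ξ]
  have key : 0 < ξ.im * (1 - normSq ξ) := by
    rw [im_mul_one_sub_normSq_of_root h]
    positivity
  exact pos_of_mul_pos_left key (by linarith)

end RootOfQuadratic

section Cosine

variable {k ε : ℝ} {ξ : ℂ}

theorem norm_sub_exp_le_of_root (hk : 0 < Real.sin k) (hε : 0 < ε)
    (h : ξ ^ 2 + ξ * ((-2 * Real.cos k : ℝ) + ε * I) + 1 = 0) (hξ : ‖ξ‖ < 1) :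
    ‖ξ - exp (I * k)‖ ≤ ε / Real.sin k := by
  have hfactor : (ξ - exp (I * k)) * (ξ - exp (-(I * k))) = -(ε * I) * ξ := by
    rw [sub_exp_mul_sub_exp_neg, ← ofReal_cos]
    simp only [ofReal_mul, ofReal_neg, ofReal_ofNat] at h
    linear_combination h
  have hprod : ‖ξ - exp (I * k)‖ * ‖ξ - exp (-(I * k))‖ = ε * ‖ξ‖ := by
    rw [← norm_mul, hfactor]
    simp [abs_of_pos hε]
  have him : (ξ - exp (-(I * k))).im = ξ.im + Real.sin k := by
    simp [exp_im, sub_eq_add_neg]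
  have hfar : Real.sin k ≤ ‖ξ - exp (-(I * k))‖ := by
    have hup := im_pos_of_root hε h hξ
    have := abs_im_le_norm (ξ - exp (-(I * k)))
    rw [him, abs_of_pos (by linarith)] at this
    linarith
  rw [le_div_iff₀ hk]
  calc ‖ξ - exp (I * k)‖ * Real.sin k
      ≤ ‖ξ - exp (I * k)‖ * ‖ξ - exp (-(I * k))‖ := by gcongr
    _ = ε * ‖ξ‖ := hprod
    _ ≤ ε := mul_le_of_le_one_right hε.le hξ.le

theorem norm_sub_exp_neg_le_of_root (hk : 0 < Real.sin k) (hε : ε < 0)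
    (h : ξ ^ 2 + ξ * ((-2 * Real.cos k : ℝ) + ε * I) + 1 = 0) (hξ : ‖ξ‖ < 1) :
    ‖ξ - exp (-(I * k))‖ ≤ -ε / Real.sin k := by
  have hconj : conj (ξ - exp (-(I * k))) = conj ξ - exp (I * k) := by
    rw [map_sub, ← exp_conj]
    simp
  rw [← norm_conj, hconj]
  exact norm_sub_exp_le_of_root hk (neg_pos.mpr hε) (conj_root h) (by rwa [norm_conj])

end Cosine

theorem tendsto_of_eventually_norm_sub_le_abs_div {F : Type*} [SeminormedAddCommGroup F]
    {l : Filter ℝ} (hl : l ≤ 𝓝 0) {f : ℝ → F} {c : F} (s : ℝ)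
    (h : ∀ᶠ ε in l, ‖f ε - c‖ ≤ |ε| / s) : Tendsto f l (𝓝 c) := by
  refine tendsto_sub_nhds_zero_iff.mp (squeeze_zero_norm' h ?_)
  exact ((continuous_abs.div_const s).tendsto' 0 0 (by simp)).mono_left hl

theorem stmt15_general (E lam k : ℝ) (hk : k ∈ Set.Ioo 0 Real.pi)
    (hE : E = -2 * Real.cos k + lam)
    (ξf : ℝ → ℂ)
    (hroot : ∀ ε : ℝ, ε ≠ 0 →
      (ξf ε) ^ 2 + (ξf ε) * ((E : ℂ) + ε * Complex.I - lam) + 1 = 0 ∧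
      ‖ξf ε‖ < 1) :
    Tendsto ξf (𝓝[>] (0 : ℝ)) (𝓝 (Complex.exp (Complex.I * k))) ∧
    Tendsto ξf (𝓝[<] (0 : ℝ)) (𝓝 (Complex.exp (-(Complex.I * k)))) := by
  have hsin : 0 < Real.sin k := Real.sin_pos_of_pos_of_lt_pi hk.1 hk.2
  have root : ∀ ε : ℝ, ε ≠ 0 →
      ξf ε ^ 2 + ξf ε * ((-2 * Real.cos k : ℝ) + ε * I) + 1 = 0 := by
    intro ε hε
    have h := (hroot ε hε).1
    rw [hE] at h
    push_cast at h ⊢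
    linear_combination h
  constructor
  · refine tendsto_of_eventually_norm_sub_le_abs_div nhdsWithin_le_nhds (Real.sin k) ?_
    filter_upwards [self_mem_nhdsWithin] with ε (hε : 0 < ε)
    rw [abs_of_pos hε]
    exact norm_sub_exp_le_of_root hsin hε (root ε hε.ne') (hroot ε hε.ne').2
  · refine tendsto_of_eventually_norm_sub_le_abs_div nhdsWithin_le_nhds (Real.sin k) ?_
    filter_upwards [self_mem_nhdsWithin] with ε (hε : ε < 0)
    rw [abs_of_neg hε]
    exact norm_sub_exp_neg_le_of_root hsin hε (root ε hε.ne) (hroot ε hε.ne).2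

/-- For |E−λ| < 2 with E = −2cos k + λ, k ∈ (0,π), the root of
    P(z) = z² + z(E + iε − λ) + 1 inside the unit disc converges to e^{ik} as ε ↘ 0
    and to e^{−ik} as ε ↗ 0. -/
theorem stmt15 (E lam k : ℝ) (hlt : |E - lam| < 2) (hk : k ∈ Set.Ioo 0 Real.pi)
    (hE : E = -2 * Real.cos k + lam)
    (ξf : ℝ → ℂ)
    (hroot : ∀ ε : ℝ, ε ≠ 0 →
      (ξf ε) ^ 2 + (ξf ε) * ((E : ℂ) + ε * Complex.I - lam) + 1 = 0 ∧
      ‖ξf ε‖ < 1) :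
    Tendsto ξf (𝓝[>] (0 : ℝ)) (𝓝 (Complex.exp (Complex.I * k))) ∧
    Tendsto ξf (𝓝[<] (0 : ℝ)) (𝓝 (Complex.exp (-(Complex.I * k)))) :=
  stmt15_general E lam k hk hE ξf hroot
end
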